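/- arXiv:1506.02979 — 5 statements merged into one kernel-verified Lean document; each statement's English description precedes it below -/
import Mathlib

section
/- Let n ≥ 2 and let ∼ be a congruence of the semigroup (𝒩,+) that is not the universal relation 𝒩×𝒩. If some full-support element of A^+(B_n) is congruent to ξ_ϑ, i.e. ξ_{(p₀,q₀)} ∼ ξ_ϑ for some p₀, q₀ ∈ [n], then ∼ equals (A^+(B_n) × A^+(B_n)) ∪ {(0,0)}; that is, any two elements of A^+(B_n) are congruent to each other and 0 is congruent only to itself. -/
/-!
Common setup: the Brandt semigroup `B n`, self-maps with pointwise addition and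
composition product, affine maps, the affine near-semiring `A⁺(Bₙ)`, and the
zero-symmetric near-semiring `𝒩 = A⁺(Bₙ) ∪ {0}`.
-/

/-- The Brandt semigroup `Bₙ`: pairs `(i,j)` with `i,j ∈ [n]`, together with the
zero element `ϑ` (represented by `none`). -/
abbrev B (n : ℕ) : Type := Option (Fin n × Fin n)

/-- Addition in the Brandt semigroup: `(i,j)+(k,l) = (i,l)` if `j = k`, and `ϑ` otherwise;
`ϑ` is absorbing. -/
def badd {n : ℕ} : B n → B n → B n
  | some (i, j), some (k, l) => if j = k then some (i, l) else none
  | _, _ => none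

/-- Pointwise addition of self-maps of `B n`:  `x(f+g) = xf + xg`. -/
def madd {n : ℕ} (f g : B n → B n) : B n → B n := fun x => badd (f x) (g x)

/-- The product of self-maps of `B n`: `x(fg) = (xf)g`. -/
def mcomp {n : ℕ} (f g : B n → B n) : B n → B n := fun x => g (f x)

/-- An additive endomorphism of the Brandt semigroup. -/
def IsEndo {n : ℕ} (e : B n → B n) : Prop := ∀ a b, e (badd a b) = badd (e a) (e b)

/-- An affine map: the pointwise sum of an additive endomorphism and a constant map. -/
def IsAffine {n : ℕ} (f : B n → B n) : Prop :=
  ∃ e c, IsEndo e ∧ ∀ x, f x = badd (e x) c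

/-- `A⁺(Bₙ)`: the subsemigroup of `(M(Bₙ), +)` generated by the affine maps. -/
inductive Aplus (n : ℕ) : (B n → B n) → Prop
  | affine {f : B n → B n} : IsAffine f → Aplus n f
  | add {f g : B n → B n} : Aplus n f → Aplus n g → Aplus n (madd f g)

lemma isEndo_constBot {n : ℕ} : IsEndo (fun _ : B n => (none : B n)) := by
  intro a b; rfl

lemma isEndo_constIdem {n : ℕ} (p : Fin n) :
    IsEndo (fun _ : B n => (some (p, p) : B n)) := by
  intro a b; simp [badd]

/-- Every constant map is affine. -/
lemma isAffine_const {n : ℕ} (c : B n) : IsAffine (fun _ : B n => c) := by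
  match c with
  | none => exact ⟨fun _ => none, none, isEndo_constBot, fun x => rfl⟩
  | some (p, q) =>
      exact ⟨fun _ => some (p, p), some (p, q), isEndo_constIdem p, fun x => by simp [badd]⟩

lemma aplus_const {n : ℕ} (c : B n) : Aplus n (fun _ : B n => c) :=
  Aplus.affine (isAffine_const c)

lemma aplus_comp_endo {n : ℕ} {e : B n → B n} (he : IsEndo e)
    {f : B n → B n} (hf : Aplus n f) : Aplus n (fun x => e (f x)) := by
  induction hf with
  | affine h =>
      rename_i f0
      obtain ⟨e', c, he', hfe⟩ := h
      refine Aplus.affine ⟨fun x => e (e' x), e c, fun a b => ?_, fun x => ?_⟩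
      · show e (e' (badd a b)) = badd (e (e' a)) (e (e' b))
        rw [he', he]
      · show e (f0 x) = badd (e (e' x)) (e c)
        rw [hfe, he]
  | add h1 h2 ih1 ih2 =>
      rename_i g1 g2
      have heq : (fun x => e (madd g1 g2 x))
          = madd (fun x => e (g1 x)) (fun x => e (g2 x)) := by
        funext x; exact he (g1 x) (g2 x)
      rw [heq]
      exact Aplus.add ih1 ih2

/-- `A⁺(Bₙ)` is closed under the product. -/
lemma aplus_comp {n : ℕ} {f g : B n → B n} (hf : Aplus n f) (hg : Aplus n g) :
    Aplus n (mcomp f g) := by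
  induction hg with
  | affine h =>
      rename_i g0
      obtain ⟨e, c, he, hge⟩ := h
      have heq : mcomp f g0 = madd (fun x => e (f x)) (fun _ => c) := by
        funext x; exact hge (f x)
      rw [heq]
      exact Aplus.add (aplus_comp_endo he hf) (aplus_const c)
  | add h1 h2 ih1 ih2 =>
      exact Aplus.add ih1 ih2

/-- `𝒩 = A⁺(Bₙ) ∪ {0}`: the zero-symmetric affine near-semiring, with a new
zero element `0` (represented by `none`) adjoined to `A⁺(Bₙ)`. -/
abbrev N (n : ℕ) : Type := Option {f : B n → B n // Aplus n f}

instance (n : ℕ) : Zero (N n) := ⟨none⟩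

/-- Addition in `𝒩`: `0` is the additive identity; on `A⁺(Bₙ)` it is pointwise addition. -/
instance (n : ℕ) : Add (N n) :=
  ⟨fun a b =>
    match a, b with
    | none, b => b
    | a, none => a
    | some f, some g => some ⟨madd f.1 g.1, Aplus.add f.2 g.2⟩⟩

/-- Multiplication in `𝒩`: `0` is absorbing; on `A⁺(Bₙ)` it is the product `fg`. -/
instance (n : ℕ) : Mul (N n) :=
  ⟨fun a b =>
    match a, b with
    | some f, some g => some ⟨mcomp f.1 g.1, aplus_comp f.2 g.2⟩
    | _, _ => none⟩

/-- The element of `𝒩` determined by a map in `A⁺(Bₙ)`. -/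
def ofA {n : ℕ} {f : B n → B n} (hf : Aplus n f) : N n := some ⟨f, hf⟩

/-- The constant map `ξ_c`, as an element of `𝒩`. -/
def xiN (n : ℕ) (c : B n) : N n := ofA (aplus_const c)

/-- `𝒞 = C_{Bₙ} ∪ {0}`: the constant maps together with `0`, as a subset of `𝒩`. -/
def Cset (n : ℕ) : Set (N n) := insert 0 (Set.range (xiN n))

/-- The relation `(A⁺(Bₙ) × A⁺(Bₙ)) ∪ {(0,0)}` on `𝒩`. -/
def theta (n : ℕ) (a b : N n) : Prop := (a ≠ 0 ∧ b ≠ 0) ∨ (a = 0 ∧ b = 0)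

/-- A congruence of the semigroup `(𝒩, +)`. -/
structure IsAddCong (n : ℕ) (r : N n → N n → Prop) : Prop where
  refl : ∀ a, r a a
  symm : ∀ {a b}, r a b → r b a
  trans : ∀ {a b c}, r a b → r b c → r a c
  add_right : ∀ {a b} (c), r a b → r (a + c) (b + c)
  add_left : ∀ {a b} (c), r a b → r (c + a) (c + b)

/-- The equivalence relations on `𝒩` whose class of `0` is a right ideal:
compatible with `+` on both sides and with `·` on the right. -/
structure IsRightCong (n : ℕ) (r : N n → N n → Prop) extends IsAddCong n r : Prop where
  mul_right : ∀ {a b} (c), r a b → r (a * c) (b * c)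

/-- A congruence of the near-semiring `𝒩`. -/
structure IsNSCong (n : ℕ) (r : N n → N n → Prop) extends IsAddCong n r : Prop where
  mul_right : ∀ {a b} (c), r a b → r (a * c) (b * c)
  mul_left : ∀ {a b} (c), r a b → r (c * a) (c * b)

/-- The singleton-support map `σ^{(k,l)}_{(p,q)}` sending `(k,l)` to `(p,q)` and
everything else to `ϑ`. -/
def sgl {n : ℕ} (k l p q : Fin n) : B n → B n :=
  fun x => if x = some (k, l) then some (p, q) else none

/-- The `n`-support map `(p,q;σ)` sending `(i,p)` to `(iσ,q)` and everything else to `ϑ`. -/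
def nsupp {n : ℕ} (p q : Fin n) (σ : Equiv.Perm (Fin n)) : B n → B n
  | some (i, j) => if j = p then some (σ i, q) else none
  | none => none

/-- The endomorphism `(i,j) ↦ (iσ, jσ)` of `Bₙ`. -/
def permEndo {n : ℕ} (σ : Equiv.Perm (Fin n)) : B n → B n
  | some (i, j) => some (σ i, σ j)
  | none => none

lemma isEndo_permEndo {n : ℕ} (σ : Equiv.Perm (Fin n)) : IsEndo (permEndo σ) := by
  rintro (_ | ⟨i, j⟩) (_ | ⟨k, l⟩) <;> simp [badd, permEndo]
  by_cases h : j = k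
  · simp [h, permEndo]
  · simp [h, fun hc => h (σ.injective hc), permEndo, badd]

lemma aplus_nsupp {n : ℕ} (p q : Fin n) (σ : Equiv.Perm (Fin n)) :
    Aplus n (nsupp p q σ) := by
  refine Aplus.affine ⟨permEndo σ, some (σ p, q), isEndo_permEndo σ, ?_⟩
  rintro (_ | ⟨i, j⟩)
  · rfl
  · show nsupp p q σ (some (i, j)) = badd (some (σ i, σ j)) (some (σ p, q))
    by_cases h : j = p
    · simp [nsupp, badd, h]
    · simp [nsupp, badd, h, fun hc => h (σ.injective hc)]

lemma sgl_eq_madd {n : ℕ} (k l p q : Fin n) :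
    sgl k l p q = madd (fun _ : B n => (some (p, q) : B n)) (nsupp l q (Equiv.swap k q)) := by
  funext x
  rcases x with _ | ⟨i, j⟩
  · rfl
  · by_cases hj : j = l
    · by_cases hi : i = k
      · subst hi; subst hj
        simp [sgl, madd, nsupp, badd, Equiv.swap_apply_left]
      · have hs : Equiv.swap k q i ≠ q := fun hc =>
          hi ((Equiv.swap k q).injective (hc.trans (Equiv.swap_apply_left k q).symm))
        simp [sgl, madd, nsupp, badd, hj, hi, Ne.symm hs]
    · simp [sgl, madd, nsupp, badd, hj]

lemma aplus_sgl {n : ℕ} (k l p q : Fin n) : Aplus n (sgl k l p q) := by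
  rw [sgl_eq_madd]
  exact Aplus.add (aplus_const _) (aplus_nsupp _ _ _)

/-- The singleton-support map `σ^{(k,l)}_{(p,q)}`, as an element of `𝒩`. -/
def sglN (n : ℕ) (k l p q : Fin n) : N n := ofA (aplus_sgl k l p q)

/-- The `n`-support map `(p,q;σ)`, as an element of `𝒩`. -/
def nsuppN (n : ℕ) (p q : Fin n) (σ : Equiv.Perm (Fin n)) : N n := ofA (aplus_nsupp p q σ)

lemma badd_none_right {n : ℕ} (a : B n) : badd a none = none := by
  rcases a with _ | ⟨i, j⟩ <;> rfl

lemma badd_none_left {n : ℕ} (a : B n) : badd none a = none := by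
  rcases a with _ | ⟨i, j⟩ <;> rfl

lemma xiN_add_xiN {n : ℕ} (c d : B n) : xiN n c + xiN n d = xiN n (badd c d) := rfl

lemma add_xiN_none {n : ℕ} {f : B n → B n} (hf : Aplus n f) :
    ofA hf + xiN n none = xiN n none :=
  congrArg some (Subtype.ext (funext fun x => badd_none_right (f x)))

lemma xiN_none_add {n : ℕ} {f : B n → B n} (hf : Aplus n f) :
    xiN n none + ofA hf = xiN n none :=
  congrArg some (Subtype.ext (funext fun x => badd_none_left (f x)))

lemma add_xiN_diag {n : ℕ} {f : B n → B n} (hf : Aplus n f)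
    {e : B n → B n} {p q : Fin n} (hfe : ∀ x, f x = badd (e x) (some (p, q))) :
    ofA hf + xiN n (some (q, q)) = ofA hf := by
  refine congrArg some (Subtype.ext (funext fun x => ?_))
  show badd (f x) (some (q, q)) = f x
  rw [hfe x]
  rcases e x with _ | ⟨i, j⟩
  · rfl
  · by_cases hj : j = p <;> simp [badd, hj]

/-- Let `n ≥ 2` and let `∼` be a congruence of the semigroup `(𝒩,+)` that is
not the universal relation. If some full-support element `ξ_{(p₀,q₀)}` of `A⁺(Bₙ)` is congruent
to `ξ_ϑ`, then `∼` equals `(A⁺(Bₙ) × A⁺(Bₙ)) ∪ {(0,0)}`. -/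
theorem stmt0 (n : ℕ) (hn : 2 ≤ n) (r : N n → N n → Prop) (hcong : IsAddCong n r)
    (hnotuniv : ¬ ∀ a b : N n, r a b)
    (p₀ q₀ : Fin n) (h : r (xiN n (some (p₀, q₀))) (xiN n none)) :
    ∀ a b : N n, r a b ↔ theta n a b := by
  -- every constant map is related to ξ_ϑ
  have rc : ∀ p q : Fin n, r (xiN n (some (p, q))) (xiN n none) := by
    intro p q
    have h1 := hcong.add_left (xiN n (some (p, p₀))) h
    rw [xiN_add_xiN, xiN_add_xiN] at h1
    have e1 : badd (some (p, p₀)) (some (p₀, q₀)) = some (p, q₀) := by simp [badd]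
    have e2 : badd (some (p, p₀)) (none : B n) = none := rfl
    rw [e1, e2] at h1
    have h2 := hcong.add_right (xiN n (some (q₀, q))) h1
    rw [xiN_add_xiN, xiN_add_xiN] at h2
    have e3 : badd (some (p, q₀)) (some (q₀, q)) = some (p, q) := by simp [badd]
    have e4 : badd (none : B n) (some (q₀, q)) = none := rfl
    rw [e3, e4] at h2
    exact h2
  -- every element of A⁺ is related to ξ_ϑ
  have rall : ∀ (f : B n → B n) (hf : Aplus n f), r (ofA hf) (xiN n none) := by
    intro f hf
    induction hf with
    | affine hA =>
        rename_i f0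
        obtain ⟨e, c, he, hfe⟩ := hA
        rcases c with _ | ⟨p, q⟩
        · have hf0 : f0 = fun _ => none := funext fun x => by
            rw [hfe x]; exact badd_none_right _
          have : ofA (Aplus.affine ⟨e, none, he, hfe⟩) = xiN n none := by
            exact congrArg some (Subtype.ext hf0)
          exact this ▸ hcong.refl _
        · have hA' : Aplus n f0 := Aplus.affine ⟨e, some (p, q), he, hfe⟩
          have h1 := hcong.add_left (ofA hA') (rc q q)
          rw [add_xiN_diag hA' hfe, add_xiN_none hA'] at h1
          exact h1
    | add h1 h2 ih1 ih2 =>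
        rename_i g1 g2
        have h3 := hcong.add_right (ofA h2) ih1
        rw [xiN_none_add h2] at h3
        exact h3
  -- any two nonzero elements are related
  have hsome : ∀ a b : N n, a ≠ 0 → b ≠ 0 → r a b := by
    intro a b ha hb
    rcases a with _ | fa
    · exact absurd rfl ha
    rcases b with _ | gb
    · exact absurd rfl hb
    exact hcong.trans (rall fa.1 fa.2) (hcong.symm (rall gb.1 gb.2))
  -- 0 is not related to any nonzero element
  have h0 : ∀ b : N n, b ≠ 0 → ¬ r 0 b := by
    intro b hb hr
    apply hnotuniv
    have hall0 : ∀ x : N n, r 0 x := by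
      intro x
      rcases eq_or_ne x 0 with h' | h'
      · rw [h']; exact hcong.refl 0
      · exact hcong.trans hr (hsome b x hb h')
    intro x y
    rcases eq_or_ne x 0 with hx | hx
    · rw [hx]; exact hall0 y
    · rcases eq_or_ne y 0 with hy | hy
      · rw [hy]; exact hcong.symm (hall0 x)
      · exact hsome x y hx hy
  intro a b
  constructor
  · intro hab
    rcases eq_or_ne a 0 with ha | ha
    · rcases eq_or_ne b 0 with hb | hb
      · exact Or.inr ⟨ha, hb⟩
      · exact absurd (ha ▸ hab) (h0 b hb)
    · rcases eq_or_ne b 0 with hb | hb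
      · exact absurd (hcong.symm (hb ▸ hab)) (h0 a ha)
      · exact Or.inl ⟨ha, hb⟩
  · rintro (⟨ha, hb⟩ | ⟨ha, hb⟩)
    · exact hsome a b ha hb
    · rw [ha, hb]; exact hcong.refl 0
end

section
/- Let n ≥ 2. The only right ideals of the zero-symmetric near-semiring 𝒩 are {0} and 𝒩 itself. Equivalently: for every equivalence relation ∼ on 𝒩 such that a ∼ b implies a+c ∼ b+c, c+a ∼ c+b, and ac ∼ bc for all c ∈ 𝒩, the congruence class of 0 under ∼ is either {0} or all of 𝒩 (and in the latter case ∼ is the universal relation). -/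
/-- Let `n ≥ 2`. The only right ideals of `𝒩` are `{0}` and `𝒩`: for every
equivalence relation on `𝒩` compatible with `+` on both sides and with `·` on the right, the
class of `0` is `{0}` or all of `𝒩` (and in the latter case the relation is universal). -/
theorem stmt1 (n : ℕ) (hn : 2 ≤ n) (r : N n → N n → Prop) (hcong : IsRightCong n r) :
    {a : N n | r a 0} = {0} ∨
      ({a : N n | r a 0} = Set.univ ∧ ∀ a b : N n, r a b) := by
  by_cases h : ∀ a : N n, r a 0 → a = 0
  · left
    ext a
    simp only [Set.mem_setOf_eq, Set.mem_singleton_iff]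
    exact ⟨h a, fun ha => ha ▸ hcong.refl 0⟩
  · right
    push_neg at h
    obtain ⟨a, ha0, hane⟩ := h
    obtain ⟨f, rfl⟩ : ∃ f, a = some f := Option.ne_none_iff_exists'.mp hane
    have hx : r (xiN n none) 0 := by
      have hm := hcong.mul_right (xiN n none) ha0
      have he : (some f : N n) * xiN n none = xiN n none := by
        show some _ = some _
        congr 1
      have hz : (0 : N n) * xiN n none = 0 := rfl
      rwa [he, hz] at hm
    have hall : ∀ b : N n, r b 0 := by
      intro b
      rcases b with _ | g
      · exact hcong.refl 0
      · have h1 := hcong.add_left (some g) hx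
        have he1 : (some g : N n) + xiN n none = xiN n none := by
          show some _ = some _
          congr 1
          refine Subtype.ext ?_
          funext x
          show badd (g.1 x) none = none
          rcases g.1 x with _ | ⟨i, j⟩ <;> rfl
        have he2 : (some g : N n) + 0 = some g := rfl
        rw [he1, he2] at h1
        exact hcong.trans (hcong.symm h1) hx
    exact ⟨Set.eq_univ_iff_forall.mpr hall,
      fun a b => hcong.trans (hall a) (hcong.symm (hall b))⟩
end

section
/- Let n ≥ 1. The subsemigroup {0} is the maximal 𝒩-subsemigroup of 𝒞: the only 𝒩-subsemigroups of 𝒞 are {0} and 𝒞 itself. That is, if T ⊆ 𝒞 is closed under the addition of 𝒩, contains 0, and satisfies ta ∈ T for all t ∈ T and a ∈ 𝒩, then T = {0} or T = 𝒞. -/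
lemma xiN_mul_xiN (n : ℕ) (c d : B n) : xiN n c * xiN n d = xiN n d := rfl

/-- Let `n ≥ 1`. `{0}` is the maximal `𝒩`-subsemigroup of `𝒞`: if `T ⊆ 𝒞`
contains `0`, is closed under `+`, and satisfies `T𝒩 ⊆ T`, then `T = {0}` or `T = 𝒞`. -/
theorem stmt3 (n : ℕ) (hn : 1 ≤ n) (T : Set (N n)) (hsub : T ⊆ Cset n)
    (h0 : (0 : N n) ∈ T) (hadd : ∀ a ∈ T, ∀ b ∈ T, a + b ∈ T)
    (hact : ∀ t ∈ T, ∀ a : N n, t * a ∈ T) :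
    T = ({0} : Set (N n)) ∨ T = Cset n := by
  by_cases hT : T = ({0} : Set (N n))
  · exact Or.inl hT
  · right
    have hne : ∃ t ∈ T, t ≠ (0 : N n) := by
      by_contra h
      push_neg at h
      apply hT
      ext x
      constructor
      · intro hx
        by_contra hx0
        exact hx0 (h x hx)
      · intro hx
        simp at hx
        exact hx ▸ h0
    obtain ⟨t, htT, ht0⟩ := hne
    have htC := hsub htT
    rcases htC with h | ⟨c, rfl⟩
    · exact absurd h ht0
    apply Set.Subset.antisymm hsub
    intro x hx
    rcases hx with h | ⟨d, rfl⟩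
    · exact h ▸ h0
    have := hact _ htT (xiN n d)
    rwa [xiN_mul_xiN] at this
end

section
/- Let n ≥ 2. The only ideals of the near-semiring 𝒩 are {0} and 𝒩: for every congruence ∼ of the near-semiring 𝒩, the congruence class of 0 under ∼ is either {0} or all of 𝒩. -/
/-- Let `n ≥ 2`. The only ideals of `𝒩` are `{0}` and `𝒩`: for every
congruence of the near-semiring `𝒩`, the class of `0` is `{0}` or all of `𝒩`. -/
theorem stmt7 (n : ℕ) (hn : 2 ≤ n) (r : N n → N n → Prop) (hcong : IsNSCong n r) :
    {a : N n | r a 0} = ({0} : Set (N n)) ∨ {a : N n | r a 0} = Set.univ := by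
  by_cases h : ∀ a, r a 0 → a = 0
  · left
    ext a
    simp only [Set.mem_setOf_eq, Set.mem_singleton_iff]
    exact ⟨h a, fun ha => ha ▸ hcong.refl 0⟩
  · right
    push_neg at h
    obtain ⟨a, ha0, hane⟩ := h
    obtain ⟨f, hf⟩ : ∃ f : {f : B n → B n // Aplus n f}, a = some f := by
      cases a with
      | none => exact absurd rfl hane
      | some f => exact ⟨f, rfl⟩
    subst hf
    have key : some f * xiN n none = xiN n none := rfl
    have hxi : r (xiN n none) 0 := by
      have := hcong.mul_right (xiN n none) ha0
      rwa [key] at this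
    ext b
    simp only [Set.mem_setOf_eq, Set.mem_univ, iff_true]
    cases b with
    | none => exact hcong.refl 0
    | some g =>
      have h1 := hcong.add_left (some g) hxi
      have h2 : some g + xiN n none = xiN n none := by
        show some _ = some _
        congr 1
        apply Subtype.ext
        funext x
        show badd (g.1 x) none = none
        cases g.1 x with
        | none => rfl
        | some p => rfl
      have h3 : some g + (0 : N n) = some g := rfl
      rw [h2, h3] at h1
      exact hcong.trans (hcong.symm h1) hxi
end

section
/- Let n ≥ 2 and let ∼ be a congruence of the near-semiring 𝒩. If σ^{(i,j)}_{(k,l)} ∼ σ^{(s,t)}_{(u,v)} for two distinct singleton-support maps σ^{(i,j)}_{(k,l)} ≠ σ^{(s,t)}_{(u,v)} (with i,j,k,l,s,t,u,v ∈ [n]), then there exists h ∈ A^+(B_n) with h ≠ ξ_ϑ and h ∼ ξ_ϑ. -/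
/-!
Multiplying on the left by the constant map `ξ_{(i,j)}` evaluates a map at `(i,j)`, and
multiplying on the right by `σ^{(k,l)}_{(k,l)}` kills every map whose values avoid `(k,l)`.
If the two related singleton maps have different supports, the first trick relates
`ξ_{(k,l)}` to `ξ_ϑ`; if they share their support, their targets differ and the second
trick relates `σ^{(i,j)}_{(k,l)}` itself to `ξ_ϑ`.
-/

section SingletonMaps

variable {n : ℕ}

lemma ofA_injective {f g : B n → B n} {hf : Aplus n f} {hg : Aplus n g}
    (h : ofA hf = ofA hg) : f = g :=
  congrArg Subtype.val (Option.some_injective _ h)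

lemma ofA_ne_zero {f : B n → B n} (hf : Aplus n f) : ofA hf ≠ 0 :=
  Option.some_ne_none _

lemma xiN_mul_ofA (c : B n) {g : B n → B n} (hg : Aplus n g) :
    xiN n c * ofA hg = xiN n (g c) :=
  rfl

lemma xiN_injective : Function.Injective (xiN n) := fun _ _ h =>
  congrFun (ofA_injective h) none

lemma sgl_apply_self (k l p q : Fin n) : sgl k l p q (some (k, l)) = some (p, q) :=
  if_pos rfl

lemma sgl_apply_of_ne {k l p q : Fin n} {x : B n} (hx : x ≠ some (k, l)) :
    sgl k l p q x = none :=
  if_neg hx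

lemma sglN_ne_xiN_none (k l p q : Fin n) : sglN n k l p q ≠ xiN n none := fun h => by
  simpa [sgl_apply_self] using congrFun (ofA_injective h) (some (k, l))

lemma sglN_mul_sglN (i j k l p q : Fin n) :
    sglN n i j k l * sglN n k l p q = sglN n i j p q := by
  refine congrArg some (Subtype.ext (funext fun x => ?_))
  by_cases hx : x = some (i, j)
  · simp only [mcomp, hx, sgl_apply_self]
  · simp only [mcomp, sgl_apply_of_ne hx, sgl_apply_of_ne (Option.some_ne_none _).symm]

lemma sglN_mul_sglN_of_ne {i j u v k l : Fin n} (h : (u, v) ≠ (k, l)) (p q : Fin n) :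
    sglN n i j u v * sglN n k l p q = xiN n none := by
  refine congrArg some (Subtype.ext (funext fun x => ?_))
  by_cases hx : x = some (i, j)
  · simp only [mcomp, hx, sgl_apply_self]
    exact sgl_apply_of_ne (by simpa using h)
  · simp only [mcomp, sgl_apply_of_ne hx, sgl_apply_of_ne (Option.some_ne_none _).symm]

end SingletonMaps

namespace IsNSCong

variable {n : ℕ} {r : N n → N n → Prop}

lemma sglN_rel_xiN_none (hr : IsNSCong n r) {i j k l u v : Fin n} (huv : (u, v) ≠ (k, l))
    (h : r (sglN n i j k l) (sglN n i j u v)) : r (sglN n i j k l) (xiN n none) := by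
  simpa only [sglN_mul_sglN, sglN_mul_sglN_of_ne huv] using hr.mul_right (sglN n k l k l) h

lemma xiN_rel_xiN_none (hr : IsNSCong n r) {i j k l s t u v : Fin n}
    (hst : (s, t) ≠ (i, j)) (h : r (sglN n i j k l) (sglN n s t u v)) :
    r (xiN n (some (k, l))) (xiN n none) := by
  have hev := hr.mul_left (xiN n (some (i, j))) h
  rwa [sglN, sglN, xiN_mul_ofA, xiN_mul_ofA, sgl_apply_self,
    sgl_apply_of_ne (by simpa [eq_comm] using hst)] at hev

end IsNSCong

theorem stmt11_general (n : ℕ) (r : N n → N n → Prop) (hcong : IsNSCong n r)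
    (i j k l s t u v : Fin n)
    (hne : sglN n i j k l ≠ sglN n s t u v)
    (h : r (sglN n i j k l) (sglN n s t u v)) :
    ∃ h' : N n, h' ≠ 0 ∧ h' ≠ xiN n none ∧ r h' (xiN n none) := by
  by_cases hst : (s, t) = (i, j)
  · obtain ⟨rfl, rfl⟩ := Prod.mk.inj hst
    have huv : (u, v) ≠ (k, l) := by
      rintro ⟨⟩
      exact hne rfl
    exact ⟨_, ofA_ne_zero _, sglN_ne_xiN_none _ _ _ _, hcong.sglN_rel_xiN_none huv h⟩
  · exact ⟨_, ofA_ne_zero _, fun hc => Option.some_ne_none _ (xiN_injective hc),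
      hcong.xiN_rel_xiN_none hst h⟩

/-- Let `n ≥ 2` and let `∼` be a congruence of the near-semiring `𝒩`.
If `σ^{(i,j)}_{(k,l)} ∼ σ^{(s,t)}_{(u,v)}` for two distinct singleton-support maps, then
some `h ∈ A⁺(Bₙ)` with `h ≠ ξ_ϑ` satisfies `h ∼ ξ_ϑ`. -/
theorem stmt11 (n : ℕ) (hn : 2 ≤ n) (r : N n → N n → Prop) (hcong : IsNSCong n r)
    (i j k l s t u v : Fin n)
    (hne : sglN n i j k l ≠ sglN n s t u v)
    (h : r (sglN n i j k l) (sglN n s t u v)) :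
    ∃ h' : N n, h' ≠ 0 ∧ h' ≠ xiN n none ∧ r h' (xiN n none) :=
  stmt11_general n r hcong i j k l s t u v hne h
end
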